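/- arXiv:1206.6053 — 5 statements merged into one kernel-verified Lean document; each statement's English description precedes it below -/
import Mathlib

section
/- Let (Ω,P) be a probability space and let μ̂_T, θ̂_T (T ∈ ℕ) be real random variables with μ̂_T → μ in probability and θ̂_T → θ in probability, where μ > 0 and θ > 0. Let Ψ : ℝ → ℝ be non-increasing with 0 ≤ Ψ(x) ≤ 1 for all x, let K : ℕ → ℝ be positive and increasing, and suppose √T·Ψ(K(T)·x) → 0 as T → ∞ for every fixed x > 0. Then √T·Ψ(K(T)·θ̂_T·μ̂_T) → 0 in probability as T → ∞. (Lemma 1, part 1.) -/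
/-!
On the event `θ̂_T μ̂_T ≥ (θ/2)(μ/2) =: c`, monotonicity of `Ψ` gives
`0 ≤ √T Ψ(K(T) θ̂_T μ̂_T) ≤ √T Ψ(K(T) c)`, a deterministic bound tending to `0`; the complementary
event has probability at most `P(θ̂_T < θ/2) + P(μ̂_T < μ/2) → 0`.
-/

open MeasureTheory Filter Topology ProbabilityTheory Matrix

noncomputable section

/-- Convergence in probability to a constant `c`: for every `ε > 0`,
`P(|X_T − c| > ε) → 0` as `T → ∞`. -/
def TendstoInProb {Ω : Type*} [MeasurableSpace Ω] (P : Measure Ω)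
    (X : ℕ → Ω → ℝ) (c : ℝ) : Prop :=
  ∀ ε : ℝ, 0 < ε →
    Tendsto (fun T => P {ω | ε < |X T ω - c|}) atTop (nhds 0)

section

variable {Ω : Type*} [MeasurableSpace Ω] {P : Measure Ω}

lemma TendstoInProb.tendsto_measure_setOf_lt {X : ℕ → Ω → ℝ} {a c : ℝ}
    (hX : TendstoInProb P X a) (hca : c < a) :
    Tendsto (fun T => P {ω | X T ω < c}) atTop (𝓝 0) := by
  refine tendsto_of_tendsto_of_tendsto_of_le_of_le tendsto_const_nhds (hX (a - c) (by linarith))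
    (fun _ => zero_le) fun T => measure_mono fun ω (hω : X T ω < c) => ?_
  show a - c < |X T ω - a|
  rw [abs_sub_comm]
  exact lt_of_lt_of_le (by linarith) (le_abs_self _)

lemma TendstoInProb.tendsto_measure_setOf_mul_lt {X Y : ℕ → Ω → ℝ} {a b c d : ℝ}
    (hX : TendstoInProb P X a) (hY : TendstoInProb P Y b)
    (hc : 0 ≤ c) (hca : c < a) (hd : 0 ≤ d) (hdb : d < b) :
    Tendsto (fun T => P {ω | X T ω * Y T ω < c * d}) atTop (𝓝 0) := by
  have hsub : ∀ T, {ω | X T ω * Y T ω < c * d} ⊆ {ω | X T ω < c} ∪ {ω | Y T ω < d} := by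
    intro T ω (hω : X T ω * Y T ω < c * d)
    by_contra hnot
    simp only [Set.mem_union, Set.mem_ofPred_eq, not_or, not_lt] at hnot
    exact hω.not_ge (mul_le_mul hnot.1 hnot.2 hd (hc.trans hnot.1))
  have hsum := (hX.tendsto_measure_setOf_lt hca).add (hY.tendsto_measure_setOf_lt hdb)
  rw [add_zero] at hsum
  exact tendsto_of_tendsto_of_tendsto_of_le_of_le tendsto_const_nhds hsum (fun _ => zero_le)
    fun T => (measure_mono (hsub T)).trans (measure_union_le _ _)

lemma tendstoInProb_zero_of_abs_le_off {Z : ℕ → Ω → ℝ} {z : ℕ → ℝ} {E : ℕ → Set Ω}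
    (hz : Tendsto z atTop (𝓝 0)) (hE : Tendsto (fun T => P (E T)) atTop (𝓝 0))
    (hZ : ∀ T, ∀ ω ∉ E T, |Z T ω| ≤ z T) :
    TendstoInProb P Z 0 := by
  intro ε hε
  have hsub : ∀ᶠ T in atTop, {ω | ε < |Z T ω - 0|} ⊆ E T := by
    filter_upwards [hz.eventually (gt_mem_nhds hε)] with T hT ω (hω : ε < |Z T ω - 0|)
    by_contra hωE
    rw [sub_zero] at hω
    exact (hZ T ω hωE).not_gt (hT.trans hω)
  exact tendsto_of_tendsto_of_tendsto_of_le_of_le' tendsto_const_nhds hE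
    (Eventually.of_forall fun _ => zero_le) (hsub.mono fun _ h => measure_mono h)

end

theorem smoothed_indicator_vanishes_on_positives_general
    {Ω : Type*} [MeasurableSpace Ω] (P : Measure Ω)
    (μhat θhat : ℕ → Ω → ℝ) (μ θ : ℝ) (hμ : 0 < μ) (hθ : 0 < θ)
    (hμhat : TendstoInProb P μhat μ) (hθhat : TendstoInProb P θhat θ)
    (Ψ : ℝ → ℝ) (hΨanti : Antitone Ψ) (hΨ01 : ∀ x : ℝ, 0 ≤ Ψ x ∧ Ψ x ≤ 1)
    (K : ℕ → ℝ) (hKpos : ∀ T, 0 < K T)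
    (hA6 : ∀ x : ℝ, 0 < x →
      Tendsto (fun T : ℕ => Real.sqrt T * Ψ (K T * x)) atTop (nhds 0)) :
    TendstoInProb P
      (fun T ω => Real.sqrt T * Ψ (K T * (θhat T ω * μhat T ω))) 0 := by
  have hc : 0 < θ / 2 * (μ / 2) := by positivity
  refine tendstoInProb_zero_of_abs_le_off (hA6 _ hc)
    (hθhat.tendsto_measure_setOf_mul_lt hμhat (by positivity) (half_lt_self hθ) (by positivity)
      (half_lt_self hμ)) fun T ω hω => ?_
  have hprod : θ / 2 * (μ / 2) ≤ θhat T ω * μhat T ω := not_lt.mp hω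
  rw [abs_of_nonneg (mul_nonneg (Real.sqrt_nonneg _) (hΨ01 _).1)]
  exact mul_le_mul_of_nonneg_left (hΨanti (mul_le_mul_of_nonneg_left hprod (hKpos T).le))
    (Real.sqrt_nonneg _)

/-- Lemma 1, part 1: for `μ > 0`, `√T·Ψ(K(T)·θ̂_T·μ̂_T) → 0` in probability. -/
theorem smoothed_indicator_vanishes_on_positives
    {Ω : Type*} [MeasurableSpace Ω] (P : Measure Ω) [IsProbabilityMeasure P]
    (μhat θhat : ℕ → Ω → ℝ) (μ θ : ℝ) (hμ : 0 < μ) (hθ : 0 < θ)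
    (hμhat : TendstoInProb P μhat μ) (hθhat : TendstoInProb P θhat θ)
    (Ψ : ℝ → ℝ) (hΨanti : Antitone Ψ) (hΨ01 : ∀ x : ℝ, 0 ≤ Ψ x ∧ Ψ x ≤ 1)
    (K : ℕ → ℝ) (hKpos : ∀ T, 0 < K T) (hKmono : StrictMono K)
    (hA6 : ∀ x : ℝ, 0 < x →
      Tendsto (fun T : ℕ => Real.sqrt T * Ψ (K T * x)) atTop (nhds 0)) :
    TendstoInProb P
      (fun T ω => Real.sqrt T * Ψ (K T * (θhat T ω * μhat T ω))) 0 :=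
  smoothed_indicator_vanishes_on_positives_general P μhat θhat μ θ hμ hθ hμhat hθhat Ψ hΨanti hΨ01 K
    hKpos hA6

end
end

section
/- Let (Ω,P) be a probability space and let μ̂_T, θ̂_T (T ∈ ℕ) be real random variables with μ̂_T → μ in probability and θ̂_T → θ in probability, where μ < 0 and θ > 0. Let Ψ : ℝ → ℝ be non-increasing with 0 ≤ Ψ(x) ≤ 1 for all x and Ψ(x) → 1 as x → −∞, and let K : ℕ → ℝ be positive and increasing with K(T) → ∞. Then Ψ(K(T)·θ̂_T·μ̂_T) → 1 in probability as T → ∞. (Lemma 1, part 3.) -/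
open MeasureTheory Filter Topology ProbabilityTheory Matrix

/-!
Outside an event whose probability tends to `0`, `θ̂_T ≥ θ/2` and `μ̂_T ≤ μ/2`, so
`K(T)·θ̂_T·μ̂_T ≤ K(T)·θμ/4`, which tends to `−∞` uniformly in `ω`; there `Ψ` is within `ε` of `1`.
-/

noncomputable section

theorem TendstoInProb.map₂ {Ω : Type*} [MeasurableSpace Ω] {P : Measure Ω}
    {X Y : ℕ → Ω → ℝ} {a b : ℝ} (hX : TendstoInProb P X a) (hY : TendstoInProb P Y b)
    {c : ℝ} (f : ℕ → ℝ → ℝ → ℝ)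
    (hf : ∀ ε > 0, ∃ δ > 0, ∀ᶠ T in atTop,
      ∀ x y, |x - a| ≤ δ → |y - b| ≤ δ → |f T x y - c| ≤ ε) :
    TendstoInProb P (fun T ω => f T (X T ω) (Y T ω)) c := by
  intro ε hε
  obtain ⟨δ, hδ, hfδ⟩ := hf ε hε
  have hsum : Tendsto (fun T => P {ω | δ < |X T ω - a|} + P {ω | δ < |Y T ω - b|})
      atTop (𝓝 0) := by
    simpa using (hX δ hδ).add (hY δ hδ)
  refine tendsto_of_tendsto_of_tendsto_of_le_of_le' tendsto_const_nhds hsum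
    (Eventually.of_forall fun _ => zero_le) ?_
  filter_upwards [hfδ] with T hT
  refine (measure_mono fun ω hω => ?_).trans (measure_union_le _ _)
  by_contra hclose
  simp only [Set.mem_union, Set.mem_ofPred_eq, not_or, not_lt] at hω hclose
  exact hω.not_ge (hT _ _ hclose.1 hclose.2)

theorem mul_le_of_abs_sub_le_half {θ μ x y : ℝ} (hθ : 0 < θ) (hμ : μ < 0)
    (hx : |x - θ| ≤ θ / 2) (hy : |y - μ| ≤ -μ / 2) : x * y ≤ θ * μ / 4 := by
  have hx' : θ / 2 ≤ x := by linarith [(abs_le.mp hx).1]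
  have hy' : y ≤ μ / 2 := by linarith [(abs_le.mp hy).2]
  nlinarith

theorem smoothed_indicator_tendsto_one_on_negatives_general
    {Ω : Type*} [MeasurableSpace Ω] (P : Measure Ω)
    (μhat θhat : ℕ → Ω → ℝ) (μ θ : ℝ) (hμ : μ < 0) (hθ : 0 < θ)
    (hμhat : TendstoInProb P μhat μ) (hθhat : TendstoInProb P θhat θ)
    (Ψ : ℝ → ℝ)
    (hΨbot : Tendsto Ψ atBot (nhds 1))
    (K : ℕ → ℝ)
    (hKtop : Tendsto K atTop atTop) :
    TendstoInProb P (fun T ω => Ψ (K T * (θhat T ω * μhat T ω))) 1 := by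
  refine hθhat.map₂ hμhat (fun T x y => Ψ (K T * (x * y))) fun ε hε => ?_
  obtain ⟨M, hM⟩ : ∃ M, ∀ z ≤ M, |Ψ z - 1| ≤ ε := by
    simpa [Real.dist_eq] using
      (atBot_basis.tendsto_iff Metric.nhds_basis_closedBall).1 hΨbot ε hε
  have hKθμ : Tendsto (fun T => K T * (θ * μ / 4)) atTop atBot :=
    hKtop.atTop_mul_const_of_neg (by nlinarith)
  refine ⟨min (θ / 2) (-μ / 2), lt_min (by linarith) (by linarith), ?_⟩
  filter_upwards [hKθμ.eventually_le_atBot M, hKtop.eventually_ge_atTop 0]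
    with T hKM hK0 x y hx hy
  apply hM
  calc K T * (x * y) ≤ K T * (θ * μ / 4) :=
        mul_le_mul_of_nonneg_left (mul_le_of_abs_sub_le_half hθ hμ
          (hx.trans (min_le_left _ _)) (hy.trans (min_le_right _ _))) hK0
    _ ≤ M := hKM

/-- Lemma 1, part 3: for `μ < 0`, `Ψ(K(T)·θ̂_T·μ̂_T) → 1` in probability. -/
theorem smoothed_indicator_tendsto_one_on_negatives
    {Ω : Type*} [MeasurableSpace Ω] (P : Measure Ω) [IsProbabilityMeasure P]
    (μhat θhat : ℕ → Ω → ℝ) (μ θ : ℝ) (hμ : μ < 0) (hθ : 0 < θ)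
    (hμhat : TendstoInProb P μhat μ) (hθhat : TendstoInProb P θhat θ)
    (Ψ : ℝ → ℝ) (hΨanti : Antitone Ψ) (hΨ01 : ∀ x : ℝ, 0 ≤ Ψ x ∧ Ψ x ≤ 1)
    (hΨbot : Tendsto Ψ atBot (nhds 1))
    (K : ℕ → ℝ) (hKpos : ∀ T, 0 < K T) (hKmono : StrictMono K)
    (hKtop : Tendsto K atTop atTop) :
    TendstoInProb P (fun T ω => Ψ (K T * (θhat T ω * μhat T ω))) 1 :=
  smoothed_indicator_tendsto_one_on_negatives_general P μhat θhat μ θ hμ hθ hμhat hθhat Ψ hΨbot K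
    hKtop
end
end

section
/- Let (Ω,P) be a probability space and let μ̂_T, θ̂_T (T ∈ ℕ) be real random variables with μ̂_T → μ in probability and θ̂_T → θ in probability, where μ > 0 and θ > 0. Let Ψ : ℝ → ℝ be non-increasing with 0 ≤ Ψ(x) ≤ 1 for all x, let K : ℕ → ℝ be positive and increasing, and suppose √T·Ψ(K(T)·x) → 0 as T → ∞ for every fixed x > 0. Then √T·Ψ(K(T)·θ̂_T·μ̂_T)·θ̂_T·μ̂_T → 0 in probability as T → ∞. (Lemma 2, part i.) -/
open MeasureTheory Filter Topology ProbabilityTheory Matrix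

noncomputable section

/-! The product `p_T = θ̂_T μ̂_T` converges in probability to `θμ > 0`, so with high probability
it lies in `[θμ/2, 3θμ/2]`. There `0 ≤ √T Ψ(K(T) p) p ≤ √T Ψ(K(T) θμ/2) · 3θμ/2`, because `Ψ`
is non-increasing, and the right-hand side tends to `0`: the statistic tends to `0` uniformly
on a neighbourhood of the limit of `p_T`. -/

namespace TendstoInProb

variable {Ω : Type*} [MeasurableSpace Ω] {P : Measure Ω} {X Y : ℕ → Ω → ℝ} {a b : ℝ}

theorem comp₂ {f : ℝ → ℝ → ℝ} (hX : TendstoInProb P X a) (hY : TendstoInProb P Y b)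
    (hf : ContinuousAt (Function.uncurry f) (a, b)) :
    TendstoInProb P (fun T ω => f (X T ω) (Y T ω)) (f a b) := by
  intro ε hε
  obtain ⟨δ, hδ, hfδ⟩ := Metric.continuousAt_iff.mp hf ε hε
  have hsub : ∀ T, {ω | ε < |f (X T ω) (Y T ω) - f a b|} ⊆
      {ω | δ / 2 < |X T ω - a|} ∪ {ω | δ / 2 < |Y T ω - b|} := by
    intro T ω hω
    by_contra hnear
    simp only [Set.mem_union, Set.mem_ofPred_eq, not_or, not_lt] at hnear
    have hclose : dist (X T ω, Y T ω) (a, b) < δ := by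
      rw [Prod.dist_eq, Real.dist_eq, Real.dist_eq]
      exact max_lt (by linarith [hnear.1]) (by linarith [hnear.2])
    exact (lt_asymm hω) (by simpa [Real.dist_eq] using hfδ hclose)
  have hbound := (hX (δ / 2) (half_pos hδ)).add (hY (δ / 2) (half_pos hδ))
  rw [add_zero] at hbound
  exact tendsto_of_tendsto_of_tendsto_of_le_of_le tendsto_const_nhds hbound (fun _ => zero_le)
    fun T => (measure_mono (hsub T)).trans (measure_union_le _ _)

theorem mul (hX : TendstoInProb P X a) (hY : TendstoInProb P Y b) :
    TendstoInProb P (fun T ω => X T ω * Y T ω) (a * b) :=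
  hX.comp₂ (f := (· * ·)) hY continuous_mul.continuousAt

theorem comp_of_tendstoUniformlyOn {g : ℕ → ℝ → ℝ} {δ : ℝ} (hX : TendstoInProb P X a)
    (hδ : 0 < δ) (hg : TendstoUniformlyOn g 0 atTop (Metric.closedBall a δ)) :
    TendstoInProb P (fun T ω => g T (X T ω)) 0 := by
  intro ε hε
  have hsub : ∀ᶠ T in atTop, {ω | ε < |g T (X T ω) - 0|} ⊆ {ω | δ < |X T ω - a|} := by
    filter_upwards [Metric.tendstoUniformlyOn_iff.mp hg ε hε] with T hT ω hω
    by_contra hnear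
    have hmem : X T ω ∈ Metric.closedBall a δ := by
      simpa [Real.dist_eq] using hnear
    have hsmall := hT _ hmem
    simp only [Pi.zero_apply, Real.dist_eq, zero_sub, abs_neg] at hsmall
    simp only [Set.mem_ofPred_eq, sub_zero] at hω
    exact lt_asymm hω hsmall
  exact tendsto_of_tendsto_of_tendsto_of_le_of_le' tendsto_const_nhds (hX δ hδ)
    (Eventually.of_forall fun _ => zero_le) (hsub.mono fun _ h => measure_mono h)

end TendstoInProb

theorem tendstoUniformlyOn_sqrt_mul_antitone_mul {Ψ : ℝ → ℝ} {K : ℕ → ℝ} (hΨ : Antitone Ψ)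
    (hΨnonneg : ∀ x, 0 ≤ Ψ x) (hK : ∀ T, 0 ≤ K T) {c B : ℝ} (hc : 0 ≤ c)
    (hlim : Tendsto (fun T : ℕ => Real.sqrt T * Ψ (K T * c)) atTop (𝓝 0)) :
    TendstoUniformlyOn (fun (T : ℕ) x => Real.sqrt T * Ψ (K T * x) * x) 0 atTop (Set.Icc c B) := by
  have hlimB : Tendsto (fun T : ℕ => Real.sqrt T * Ψ (K T * c) * B) atTop (𝓝 0) := by
    simpa using hlim.mul_const B
  rw [Metric.tendstoUniformlyOn_iff]
  intro ε hε
  filter_upwards [hlimB.eventually (gt_mem_nhds hε)] with T hT x hx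
  have hx0 : 0 ≤ x := hc.trans hx.1
  have hnonneg : 0 ≤ Real.sqrt T * Ψ (K T * x) * x := by
    have := hΨnonneg (K T * x)
    positivity
  have hle : Real.sqrt T * Ψ (K T * x) * x ≤ Real.sqrt T * Ψ (K T * c) * B := by
    have hΨle : Ψ (K T * x) ≤ Ψ (K T * c) := hΨ (mul_le_mul_of_nonneg_left hx.1 (hK T))
    have := hΨnonneg (K T * c)
    gcongr
    exact hx.2
  rw [Pi.zero_apply, Real.dist_eq, zero_sub, abs_neg, abs_of_nonneg hnonneg]
  linarith

theorem smoothed_statistic_vanishes_on_positives_general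
    {Ω : Type*} [MeasurableSpace Ω] (P : Measure Ω)
    (μhat θhat : ℕ → Ω → ℝ) (μ θ : ℝ) (hμ : 0 < μ) (hθ : 0 < θ)
    (hμhat : TendstoInProb P μhat μ) (hθhat : TendstoInProb P θhat θ)
    (Ψ : ℝ → ℝ) (hΨanti : Antitone Ψ) (hΨ01 : ∀ x : ℝ, 0 ≤ Ψ x ∧ Ψ x ≤ 1)
    (K : ℕ → ℝ) (hKpos : ∀ T, 0 < K T)
    (hA6 : ∀ x : ℝ, 0 < x →
      Tendsto (fun T : ℕ => Real.sqrt T * Ψ (K T * x)) atTop (nhds 0)) :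
    TendstoInProb P
      (fun T ω => Real.sqrt T * Ψ (K T * (θhat T ω * μhat T ω)) *
        (θhat T ω * μhat T ω)) 0 := by
  have hθμ : 0 < θ * μ := mul_pos hθ hμ
  have hball :
      Metric.closedBall (θ * μ) (θ * μ / 2) = Set.Icc (θ * μ / 2) (θ * μ + θ * μ / 2) := by
    rw [Real.closedBall_eq_Icc, sub_half]
  refine (hθhat.mul hμhat).comp_of_tendstoUniformlyOn
    (g := fun T x => Real.sqrt T * Ψ (K T * x) * x) (half_pos hθμ) ?_
  rw [hball]
  exact tendstoUniformlyOn_sqrt_mul_antitone_mul hΨanti (fun x => (hΨ01 x).1)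
    (fun T => (hKpos T).le) (half_pos hθμ).le (hA6 _ (half_pos hθμ))

/-- Lemma 2, part i: for `μ > 0`, `√T·Ψ(K(T)·θ̂_T·μ̂_T)·θ̂_T·μ̂_T → 0` in probability. -/
theorem smoothed_statistic_vanishes_on_positives
    {Ω : Type*} [MeasurableSpace Ω] (P : Measure Ω) [IsProbabilityMeasure P]
    (μhat θhat : ℕ → Ω → ℝ) (μ θ : ℝ) (hμ : 0 < μ) (hθ : 0 < θ)
    (hμhat : TendstoInProb P μhat μ) (hθhat : TendstoInProb P θhat θ)
    (Ψ : ℝ → ℝ) (hΨanti : Antitone Ψ) (hΨ01 : ∀ x : ℝ, 0 ≤ Ψ x ∧ Ψ x ≤ 1)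
    (K : ℕ → ℝ) (hKpos : ∀ T, 0 < K T) (hKmono : StrictMono K)
    (hA6 : ∀ x : ℝ, 0 < x →
      Tendsto (fun T : ℕ => Real.sqrt T * Ψ (K T * x)) atTop (nhds 0)) :
    TendstoInProb P
      (fun T ω => Real.sqrt T * Ψ (K T * (θhat T ω * μhat T ω)) *
        (θhat T ω * μhat T ω)) 0 :=
  smoothed_statistic_vanishes_on_positives_general P μhat θhat μ θ hμ hθ hμhat hθhat Ψ hΨanti hΨ01 K
    hKpos hA6

end
end

section
/- Let Ψ, ψ̃, a₁ < … < aₙ, b_Ψ and Λ_T be as in the piecewise-smooth indicator setup, and let K : ℕ → ℝ be positive. Then for every T ∈ ℕ with T ≥ 1, every m ∈ ℝ and every v > 0: |Λ_T(m, v)| ≤ v·(K(T)/√T)·( b_Ψ + √(2v/π)·(K(T)/√T)·Σᵢ₌₁ⁿ aᵢ⁻² ). -/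
/-!
The slope term is controlled because `ψ̃(x)` is a left limit of `ψ`, which is bounded by `b_Ψ`
off the finitely many points `aᵢ`; every jump `Ψ(aᵢ⁻) − Ψ(aᵢ⁺)` of the `[0, 1]`-valued `Ψ` has
size at most `1`; and the Gaussian tail estimate `x² φ(x) ≤ √(2/π)` (from `eʸ ≥ 1 + y`) turns
`√v φ(aᵢ √T / (√v K(T)))` into `√(2v/π) v (K(T)/√T)² aᵢ⁻²`.
-/

open MeasureTheory Filter Topology ProbabilityTheory Matrix

noncomputable section

/-- The standard normal density `φ(x) = exp(−x²/2)/√(2π)`. -/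
def normalPDF (x : ℝ) : ℝ := Real.exp (-(x ^ 2) / 2) / Real.sqrt (2 * Real.pi)

/-- The adjustment term
`Λ_T(m, v) = v·ψ̃(K(T)·m)·K(T)/√T − √v·Σᵢ (Ψ(aᵢ⁻) − Ψ(aᵢ⁺))·φ(aᵢ·√T/(√v·K(T)))`,
where `ψt` is the left-limit of the derivative of `Ψ` and `ΨL i`, `ΨR i` are the
one-sided limits of `Ψ` at the discontinuity points `a i`. -/
def Lambda (K : ℕ → ℝ) (ψt : ℝ → ℝ) {n : ℕ} (a ΨL ΨR : Fin n → ℝ)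
    (T : ℕ) (m v : ℝ) : ℝ :=
  v * ψt (K T * m) * K T / Real.sqrt T -
    Real.sqrt v * ∑ i, (ΨL i - ΨR i) * normalPDF (a i * Real.sqrt T / (Real.sqrt v * K T))

open Real

lemma abs_le_of_tendsto_nhdsLT_of_finite {f : ℝ → ℝ} {S : Set ℝ} {b L x : ℝ} (hS : S.Finite)
    (hf : ∀ y ∉ S, |f y| ≤ b) (h : Tendsto f (𝓝[<] x) (𝓝 L)) : |L| ≤ b :=
  le_of_tendsto h.abs <| Eventually.mono
    ((nhdsLT_le_nhdsNE x).trans (nhdsNE_le_cofinite x) hS.compl_mem_cofinite) hf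

lemma abs_sub_le_one_of_tendsto {α : Type*} {f : α → ℝ} {l₁ l₂ : Filter α} [l₁.NeBot] [l₂.NeBot]
    {p q : ℝ} (hf : ∀ x, 0 ≤ f x ∧ f x ≤ 1) (hp : Tendsto f l₁ (𝓝 p)) (hq : Tendsto f l₂ (𝓝 q)) :
    |p - q| ≤ 1 := by
  obtain ⟨hp₀, hp₁⟩ : p ∈ Set.Icc 0 1 := isClosed_Icc.mem_of_tendsto hp (.of_forall hf)
  obtain ⟨hq₀, hq₁⟩ : q ∈ Set.Icc 0 1 := isClosed_Icc.mem_of_tendsto hq (.of_forall hf)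
  exact abs_sub_le_of_nonneg_of_le hp₀ hp₁ hq₀ hq₁

lemma normalPDF_nonneg (x : ℝ) : 0 ≤ normalPDF x := by
  unfold normalPDF
  positivity

lemma sq_mul_exp_neg_sq_div_two_le (x : ℝ) : x ^ 2 * exp (-(x ^ 2) / 2) ≤ 2 := by
  set y := x ^ 2 / 2
  have hy : y + 1 ≤ exp y := add_one_le_exp y
  calc x ^ 2 * exp (-(x ^ 2) / 2) = 2 * (y / exp y) := by
        rw [neg_div, exp_neg]; ring
    _ ≤ 2 * 1 := by gcongr; exact (div_le_one (exp_pos y)).2 (by linarith)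
    _ = 2 := mul_one 2

lemma sq_mul_normalPDF_le (x : ℝ) : x ^ 2 * normalPDF x ≤ √(2 / π) := by
  have h2π : √(2 / π) = 2 / √(2 * π) := by
    rw [show 2 / π = 2 ^ 2 / (2 * π) by field_simp, sqrt_div' _ (by positivity),
      sqrt_sq zero_le_two]
  rw [h2π, normalPDF, mul_div_assoc']
  gcongr
  exact sq_mul_exp_neg_sq_div_two_le x

lemma sqrt_mul_normalPDF_le {v s k c : ℝ} (hv : 0 < v) (hs : 0 < s) (hk : 0 < k) (hc : c ≠ 0) :
    √v * normalPDF (c * s / (√v * k)) ≤ √(2 * v / π) * v * (k / s) ^ 2 / c ^ 2 := by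
  set x := c * s / (√v * k)
  have hx : 0 < x ^ 2 := by positivity
  have hsq : x ^ 2 = c ^ 2 * s ^ 2 / (v * k ^ 2) := by
    rw [div_pow, mul_pow, mul_pow, sq_sqrt hv.le]
  calc √v * normalPDF x ≤ √v * (√(2 / π) / x ^ 2) := by
        gcongr
        rw [le_div_iff₀' hx]
        exact sq_mul_normalPDF_le x
    _ = √(2 * v / π) * v * (k / s) ^ 2 / c ^ 2 := by
        rw [hsq, show 2 * v / π = v * (2 / π) by ring, sqrt_mul hv.le]
        field_simp

lemma abs_sqrt_mul_sum_mul_normalPDF_le {ι : Type*} [Fintype ι] {w c : ι → ℝ} {v s k : ℝ}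
    (hv : 0 < v) (hs : 0 < s) (hk : 0 < k) (hw : ∀ i, |w i| ≤ 1) (hc : ∀ i, c i ≠ 0) :
    |√v * ∑ i, w i * normalPDF (c i * s / (√v * k))| ≤
      √(2 * v / π) * v * (k / s) ^ 2 * ∑ i, (c i ^ 2)⁻¹ := by
  rw [abs_mul, abs_of_pos (sqrt_pos.2 hv), Finset.mul_sum]
  refine (mul_le_mul_of_nonneg_left (Finset.abs_sum_le_sum_abs _ _) (sqrt_nonneg v)).trans ?_
  rw [Finset.mul_sum]
  refine Finset.sum_le_sum fun i _ => ?_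
  calc √v * |w i * normalPDF (c i * s / (√v * k))|
      = |w i| * (√v * normalPDF (c i * s / (√v * k))) := by
        rw [abs_mul, abs_of_nonneg (normalPDF_nonneg _)]; ring
    _ ≤ 1 * (√(2 * v / π) * v * (k / s) ^ 2 / c i ^ 2) :=
        mul_le_mul (hw i) (sqrt_mul_normalPDF_le hv hs hk (hc i))
          (mul_nonneg (sqrt_nonneg v) (normalPDF_nonneg _)) zero_le_one
    _ = √(2 * v / π) * v * (k / s) ^ 2 * (c i ^ 2)⁻¹ := by ring

theorem adjustment_term_bound_general
    -- the piecewise-smooth indicator setup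
    (Ψ ψ ψt : ℝ → ℝ) {n : ℕ} (a ΨL ΨR : Fin n → ℝ) (bΨ : ℝ)
    (hΨ01 : ∀ x : ℝ, 0 ≤ Ψ x ∧ Ψ x ≤ 1)
    (hane : ∀ i, a i ≠ 0)
    (hψbd : ∀ x ∉ Set.range a, |ψ x| ≤ bΨ)
    (hψt : ∀ x : ℝ, Tendsto ψ (nhdsWithin x (Set.Iio x)) (nhds (ψt x)))
    (hΨL : ∀ i, Tendsto Ψ (nhdsWithin (a i) (Set.Iio (a i))) (nhds (ΨL i)))
    (hΨR : ∀ i, Tendsto Ψ (nhdsWithin (a i) (Set.Ioi (a i))) (nhds (ΨR i)))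
    -- the tuning sequence
    (K : ℕ → ℝ) (hKpos : ∀ T, 0 < K T) :
    ∀ T : ℕ, 1 ≤ T → ∀ m v : ℝ, 0 < v →
      |Lambda K ψt a ΨL ΨR T m v| ≤
        v * (K T / Real.sqrt T) *
          (bΨ + Real.sqrt (2 * v / Real.pi) * (K T / Real.sqrt T) *
            ∑ i, ((a i) ^ 2)⁻¹) := by
  intro T hT m v hv
  have hs : 0 < √T := sqrt_pos.2 (by exact_mod_cast hT)
  have hscale : 0 ≤ v * (K T / √T) := (mul_pos hv (div_pos (hKpos T) hs)).le
  have hslope : |v * ψt (K T * m) * K T / √T| ≤ v * (K T / √T) * bΨ := by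
    rw [show v * ψt (K T * m) * K T / √T = v * (K T / √T) * ψt (K T * m) by ring, abs_mul,
      abs_of_nonneg hscale]
    exact mul_le_mul_of_nonneg_left
      (abs_le_of_tendsto_nhdsLT_of_finite (Set.finite_range a) hψbd (hψt _)) hscale
  have hjumps := abs_sqrt_mul_sum_mul_normalPDF_le hv hs (hKpos T)
    (fun i => abs_sub_le_one_of_tendsto hΨ01 (hΨL i) (hΨR i)) hane
  calc |Lambda K ψt a ΨL ΨR T m v|
      ≤ v * (K T / √T) * bΨ + √(2 * v / π) * v * (K T / √T) ^ 2 * ∑ i, (a i ^ 2)⁻¹ :=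
        (abs_sub _ _).trans (add_le_add hslope hjumps)
    _ = _ := by ring

/-- The deterministic bound on the adjustment term:
`|Λ_T(m, v)| ≤ v·(K(T)/√T)·(b_Ψ + √(2v/π)·(K(T)/√T)·Σᵢ aᵢ⁻²)`. -/
theorem adjustment_term_bound
    -- the piecewise-smooth indicator setup
    (Ψ ψ ψt : ℝ → ℝ) {n : ℕ} (a ΨL ΨR : Fin n → ℝ) (bΨ : ℝ)
    (hΨanti : Antitone Ψ) (hΨ01 : ∀ x : ℝ, 0 ≤ Ψ x ∧ Ψ x ≤ 1)
    (ha : StrictMono a) (hane : ∀ i, a i ≠ 0)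
    (hderiv : ∀ x ∉ Set.range a, HasDerivAt Ψ (ψ x) x)
    (hψcont : ContinuousOn ψ (Set.range a)ᶜ)
    (hψbd : ∀ x ∉ Set.range a, |ψ x| ≤ bΨ)
    (hψt : ∀ x : ℝ, Tendsto ψ (nhdsWithin x (Set.Iio x)) (nhds (ψt x)))
    (hΨL : ∀ i, Tendsto Ψ (nhdsWithin (a i) (Set.Iio (a i))) (nhds (ΨL i)))
    (hΨR : ∀ i, Tendsto Ψ (nhdsWithin (a i) (Set.Ioi (a i))) (nhds (ΨR i)))
    -- the tuning sequence
    (K : ℕ → ℝ) (hKpos : ∀ T, 0 < K T) :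
    ∀ T : ℕ, 1 ≤ T → ∀ m v : ℝ, 0 < v →
      |Lambda K ψt a ΨL ΨR T m v| ≤
        v * (K T / Real.sqrt T) *
          (bΨ + Real.sqrt (2 * v / Real.pi) * (K T / Real.sqrt T) *
            ∑ i, ((a i) ^ 2)⁻¹) :=
  adjustment_term_bound_general Ψ ψ ψt a ΨL ΨR bΨ hΨ01 hane hψbd hψt hΨL hΨR K hKpos
end
end

section
/- Let c > 0 and h > 0. Let Ψ : ℝ → ℝ be bounded and non-increasing, and suppose there are finitely many points a₁ < … < aₙ such that Ψ is continuously differentiable on ℝ ∖ {a₁,…,aₙ} with derivative ψ bounded in absolute value, the left-hand limit ψ̃(x) := lim_{y→x⁻} ψ(y) exists at every x ∈ ℝ, and the one-sided limits Ψ(aᵢ⁻), Ψ(aᵢ⁺) exist for each i. If X has distribution gaussianReal 0 c, then E[Ψ(h·X)·X] = c·h·E[ψ̃(h·X)] − √c·Σᵢ₌₁ⁿ (Ψ(aᵢ⁻) − Ψ(aᵢ⁺))·φ(aᵢ/(h·√c)), where φ(x) = exp(−x²/2)/√(2π) is the standard normal density. (Appendix A identity used to construct the adjustment term Λ_T.)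 -/
/-!
With `Y = h * X ~ N(0, v)`, `v = h²c`, and `p` the density of `Y`, one has `v p' = -y p`, so off
the jump points `(v p Ψ)' = v p ψ̃ - y p Ψ` (`ψ̃ = ψ` wherever `ψ` is continuous). Subtracting
from `v p Ψ` its saltus function, the step function carrying its jumps
`v p(aᵢ) (Ψ(aᵢ⁺) - Ψ(aᵢ⁻))`, leaves a continuous function differentiable off finitely many
points, so the fundamental theorem of calculus applies on the whole line. As `v p Ψ` vanishes at
`±∞`, this is Stein's identity `E[Ψ(Y) Y] = v E[ψ̃(Y)] - v ∑ᵢ (Ψ(aᵢ⁻) - Ψ(aᵢ⁺)) p(aᵢ)`;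
dividing by `h` gives the claim.
-/

open MeasureTheory Filter Topology ProbabilityTheory Matrix

noncomputable section

open Set Function
open scoped NNReal

theorem Set.Finite.eventually_notMem_nhdsNE {X : Type*} [TopologicalSpace X] [T1Space X]
    {s : Set X} (hs : s.Finite) (x : X) : ∀ᶠ y in 𝓝[≠] x, y ∉ s := by
  have hx : (s \ {x})ᶜ ∈ 𝓝 x := hs.sdiff.isClosed.compl_mem_nhds (by simp)
  filter_upwards [nhdsWithin_le_nhds hx, self_mem_nhdsWithin] with y hy hyx hys
  exact hy ⟨hys, hyx⟩

theorem Function.extend_eventuallyEq_of_notMem {α β γ : Type*} {l : Filter β} {a : α → β}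
    {g : α → γ} {F : β → γ} (h : ∀ᶠ x in l, x ∉ range a) : extend a g F =ᶠ[l] F :=
  h.mono fun _ hx => extend_apply' _ _ _ fun ⟨i, hi⟩ => hx ⟨i, hi⟩

theorem integral_of_hasDerivAt_off_countable_of_tendsto {E : Type*} [NormedAddCommGroup E]
    [NormedSpace ℝ E] [CompleteSpace E] {f f' : ℝ → E} {s : Set ℝ} {m n : E}
    (hs : s.Countable) (hf : Continuous f) (hderiv : ∀ x ∉ s, HasDerivAt f (f' x) x)
    (hf' : Integrable f') (hbot : Tendsto f atBot (𝓝 m)) (htop : Tendsto f atTop (𝓝 n)) :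
    ∫ x, f' x = n - m := by
  have hN : Tendsto (fun k : ℕ => -(k : ℝ)) atTop atBot :=
    tendsto_neg_atTop_atBot.comp tendsto_natCast_atTop_atTop
  have hFTC : ∀ a b : ℝ, ∫ x in a..b, f' x = f b - f a := fun a b =>
    integral_eq_of_hasDerivAt_off_countable f f' hs hf.continuousOn
      (fun x hx => hderiv x hx.2) hf'.intervalIntegrable
  refine tendsto_nhds_unique (intervalIntegral_tendsto_integral hf' hN
    tendsto_natCast_atTop_atTop) ?_
  simp only [hFTC]
  exact (htop.comp tendsto_natCast_atTop_atTop).sub (hbot.comp hN)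

section Saltus

variable {β : Type*} [TopologicalSpace β] [Zero β]

theorem tendsto_ite_lt_nhdsLT (t : ℝ) (e : β) (x : ℝ) :
    Tendsto (fun y => if t < y then e else 0) (𝓝[<] x) (𝓝 (if t < x then e else 0)) := by
  refine tendsto_const_nhds.congr' ?_
  by_cases htx : t < x
  · filter_upwards [Ioo_mem_nhdsLT htx] with y hy
    simp [htx, hy.1]
  · filter_upwards [self_mem_nhdsWithin] with y (hy : y < x)
    have hty : ¬t < y := fun h => htx (h.trans hy)
    simp [htx, hty]

theorem tendsto_ite_lt_nhdsGT (t : ℝ) (e : β) (x : ℝ) :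
    Tendsto (fun y => if t < y then e else 0) (𝓝[>] x) (𝓝 (if t ≤ x then e else 0)) := by
  refine tendsto_const_nhds.congr' ?_
  by_cases htx : t ≤ x
  · filter_upwards [self_mem_nhdsWithin] with y (hy : x < y)
    simp [htx, htx.trans_lt hy]
  · filter_upwards [Ioo_mem_nhdsGT (not_le.1 htx)] with y hy
    simp [htx, not_lt.2 hy.2.le]

variable {ι E : Type*} [Fintype ι] [NormedAddCommGroup E]

def saltus (a : ι → ℝ) (FL FR : ι → E) (x : ℝ) : E :=
  ∑ i, if a i < x then FR i - FL i else 0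

variable {a : ι → ℝ} {FL FR : ι → E}

theorem tendsto_saltus_nhdsLT (x : ℝ) :
    Tendsto (saltus a FL FR) (𝓝[<] x) (𝓝 (saltus a FL FR x)) :=
  tendsto_finsetSum _ fun i _ => tendsto_ite_lt_nhdsLT (a i) _ x

theorem tendsto_saltus_nhdsGT (ha : Injective a) (k : ι) :
    Tendsto (saltus a FL FR) (𝓝[>] (a k)) (𝓝 (saltus a FL FR (a k) + (FR k - FL k))) := by
  classical
  have hsplit : ∀ i, (if a i ≤ a k then FR i - FL i else 0)
      = (if a i < a k then FR i - FL i else 0) + if i = k then FR i - FL i else 0 := by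
    intro i
    rcases lt_trichotomy (a i) (a k) with hlt | heq | hgt
    · simp [hlt.le, hlt, ha.ne_iff.1 hlt.ne]
    · simp [ha heq]
    · simp [not_le.2 hgt, not_lt.2 hgt.le, ha.ne_iff.1 hgt.ne']
  have hsum := tendsto_finsetSum Finset.univ fun i _ =>
    tendsto_ite_lt_nhdsGT (a i) (FR i - FL i) (a k)
  simp only [hsplit, Finset.sum_add_distrib, Finset.sum_ite_eq', Finset.mem_univ,
    if_true] at hsum
  exact hsum

theorem saltus_eventuallyEq_of_notMem {x : ℝ} (hx : x ∉ range a) :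
    saltus a FL FR =ᶠ[𝓝 x] fun _ => saltus a FL FR x := by
  have hterm : ∀ i, ∀ᶠ y in 𝓝 x,
      (if a i < y then FR i - FL i else 0) = if a i < x then FR i - FL i else 0 := by
    intro i
    have hne : a i ≠ x := fun h => hx ⟨i, h⟩
    rcases hne.lt_or_gt with hlt | hgt
    · filter_upwards [Ioi_mem_nhds hlt] with y hy
      simp [hlt, mem_Ioi.1 hy]
    · filter_upwards [Iio_mem_nhds hgt] with y hy
      simp [not_lt.2 hgt.le, not_lt.2 (mem_Iio.1 hy).le]
  filter_upwards [eventually_all.2 hterm] with y hy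
  exact Finset.sum_congr rfl fun i _ => hy i

variable (a FL FR) in
theorem tendsto_saltus_atBot : Tendsto (saltus a FL FR) atBot (𝓝 0) := by
  refine tendsto_const_nhds.congr' ?_
  filter_upwards [eventually_all.2 fun i => eventually_le_atBot (a i)] with x hx
  simp [saltus, fun i => not_lt.2 (hx i)]

variable (a FL FR) in
theorem tendsto_saltus_atTop :
    Tendsto (saltus a FL FR) atTop (𝓝 (∑ i, (FR i - FL i))) := by
  refine tendsto_const_nhds.congr' ?_
  filter_upwards [eventually_all.2 fun i => eventually_gt_atTop (a i)] with x hx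
  simp [saltus, hx]

theorem continuous_extend_sub_saltus (ha : Injective a) {F : ℝ → E}
    (hF : ∀ x ∉ range a, ContinuousAt F x)
    (hL : ∀ i, Tendsto F (𝓝[<] (a i)) (𝓝 (FL i)))
    (hR : ∀ i, Tendsto F (𝓝[>] (a i)) (𝓝 (FR i))) :
    Continuous (extend a FL F - saltus a FL FR) := by
  refine continuous_iff_continuousAt.2 fun x => ?_
  by_cases hx : x ∈ range a
  · obtain ⟨k, rfl⟩ := hx
    have hext : extend a FL F =ᶠ[𝓝[≠] (a k)] F :=
      extend_eventuallyEq_of_notMem ((finite_range a).eventually_notMem_nhdsNE (a k))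
    have hval : (extend a FL F - saltus a FL FR) (a k) = FL k - saltus a FL FR (a k) := by
      simp [ha.extend_apply]
    rw [continuousAt_iff_continuous_left'_right', ContinuousWithinAt, ContinuousWithinAt, hval]
    constructor
    · exact ((hL k).congr' (hext.filter_mono (nhdsLT_le_nhdsNE _)).symm).sub
        (tendsto_saltus_nhdsLT _)
    · rw [show FL k - saltus a FL FR (a k) = FR k - (saltus a FL FR (a k) + (FR k - FL k)) by
        abel]
      exact ((hR k).congr' (hext.filter_mono (nhdsGT_le_nhdsNE _)).symm).sub
        (tendsto_saltus_nhdsGT ha k)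
  · have hext : extend a FL F =ᶠ[𝓝 x] F :=
      extend_eventuallyEq_of_notMem ((finite_range a).isClosed.compl_mem_nhds hx)
    exact ((hF x hx).congr hext.symm).sub
      (continuousAt_const.congr (saltus_eventuallyEq_of_notMem hx).symm)

theorem integral_eq_sub_sub_sum_jumps [NormedSpace ℝ E] [CompleteSpace E] (ha : Injective a)
    {F f : ℝ → E} {m M : E} (hderiv : ∀ x ∉ range a, HasDerivAt F (f x) x) (hf : Integrable f)
    (hL : ∀ i, Tendsto F (𝓝[<] (a i)) (𝓝 (FL i)))
    (hR : ∀ i, Tendsto F (𝓝[>] (a i)) (𝓝 (FR i)))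
    (hbot : Tendsto F atBot (𝓝 m)) (htop : Tendsto F atTop (𝓝 M)) :
    ∫ x, f x = M - m - ∑ i, (FR i - FL i) := by
  have hfar : ∀ l : Filter ℝ, l ≤ cofinite → extend a FL F =ᶠ[l] F := fun l hl =>
    extend_eventuallyEq_of_notMem (hl (finite_range a).compl_mem_cofinite)
  have hbot' := (hbot.congr' (hfar _ atBot_le_cofinite).symm).sub (tendsto_saltus_atBot a FL FR)
  have htop' := (htop.congr' (hfar _ atTop_le_cofinite).symm).sub (tendsto_saltus_atTop a FL FR)
  rw [integral_of_hasDerivAt_off_countable_of_tendsto (finite_range a).countable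
    (continuous_extend_sub_saltus ha (fun x hx => (hderiv x hx).continuousAt) hL hR)
    (fun x hx => ?_) hf hbot' htop', sub_zero, sub_sub, add_comm, sub_sub]
  have hext : extend a FL F =ᶠ[𝓝 x] F :=
    extend_eventuallyEq_of_notMem ((finite_range a).isClosed.compl_mem_nhds hx)
  simpa using ((hderiv x hx).sub_const (saltus a FL FR x)).congr_of_eventuallyEq
    (hext.sub (saltus_eventuallyEq_of_notMem hx))

end Saltus

theorem aestronglyMeasurable_of_continuousAt_off_countable {E : Type*} [NormedAddCommGroup E]
    {f : ℝ → E} {s : Set ℝ} (hs : s.Countable) (hf : ∀ x ∉ s, ContinuousAt f x) :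
    AEStronglyMeasurable f volume := by
  rw [← Measure.restrict_eq_self_of_ae_mem (hs.ae_notMem volume)]
  exact (continuousOn_of_forall_continuousAt fun x hx => hf x hx).aestronglyMeasurable
    hs.measurableSet.compl

theorem aestronglyMeasurable_of_hasDerivAt_off_countable {E : Type*} [NormedAddCommGroup E]
    [NormedSpace ℝ E] [CompleteSpace E] {F f : ℝ → E} {s : Set ℝ} (hs : s.Countable)
    (hderiv : ∀ x ∉ s, HasDerivAt F (f x) x) : AEStronglyMeasurable f volume :=
  (aestronglyMeasurable_deriv F volume).congr
    ((hs.ae_notMem volume).mono fun x hx => (hderiv x hx).deriv)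

namespace ProbabilityTheory

variable {μ : ℝ} {v : ℝ≥0}

theorem hasDerivAt_gaussianPDFReal (x : ℝ) :
    HasDerivAt (gaussianPDFReal μ v) (-((x - μ) / v) * gaussianPDFReal μ v x) x := by
  have hsq : HasDerivAt (fun y => -(y - μ) ^ 2 / (2 * v)) (-(2 * (x - μ)) / (2 * v)) x := by
    simpa using (((hasDerivAt_id x).sub_const μ).pow 2).neg.div_const (2 * (v : ℝ))
  rw [gaussianPDFReal_def]
  refine (hsq.exp.const_mul _).congr_deriv ?_
  beta_reduce
  ring

theorem continuous_gaussianPDFReal : Continuous (gaussianPDFReal μ v) :=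
  continuous_iff_continuousAt.2 fun x => (hasDerivAt_gaussianPDFReal x).continuousAt

theorem tendsto_gaussianPDFReal_cocompact :
    Tendsto (gaussianPDFReal μ v) (cocompact ℝ) (𝓝 0) := by
  rcases eq_or_ne v 0 with rfl | hv
  · rw [gaussianPDFReal_zero_var]
    exact tendsto_const_nhds
  have hsq : Tendsto (fun x => (x - μ) ^ 2) (cocompact ℝ) atTop := by
    simpa [Function.comp_def, Real.dist_eq, sq_abs] using
      (tendsto_pow_atTop two_ne_zero).comp (tendsto_dist_right_cocompact_atTop μ)
  have hexp : Tendsto (fun x => -(x - μ) ^ 2 / (2 * v)) (cocompact ℝ) atBot :=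
    ((tendsto_neg_atTop_atBot (G := ℝ)).comp hsq).atBot_div_const (by positivity)
  simpa [gaussianPDFReal_def] using
    (Real.tendsto_exp_atBot.comp hexp).const_mul (Real.sqrt (2 * Real.pi * v))⁻¹

theorem tendsto_gaussianPDFReal_mul_cocompact {Ψ : ℝ → ℝ} {C : ℝ} (hΨ : ∀ x, |Ψ x| ≤ C) :
    Tendsto (fun x => gaussianPDFReal μ v x * Ψ x) (cocompact ℝ) (𝓝 0) :=
  tendsto_gaussianPDFReal_cocompact.zero_mul_isBoundedUnder_le
    (isBoundedUnder_of ⟨C, fun x => (Real.norm_eq_abs _).trans_le (hΨ x)⟩)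

theorem integrable_gaussianReal_iff (hv : v ≠ 0) {g : ℝ → ℝ} :
    Integrable g (gaussianReal μ v) ↔ Integrable (fun x => gaussianPDFReal μ v x * g x) := by
  rw [gaussianReal_of_var_ne_zero _ hv, integrable_withDensity_iff_integrable_smul'
    (measurable_gaussianPDF μ v) (ae_of_all _ fun _ => gaussianPDF_lt_top)]
  simp [toReal_gaussianPDF]

theorem mul_gaussianPDFReal_zero (x : ℝ) :
    v * gaussianPDFReal 0 v x = Real.sqrt v * normalPDF (x / Real.sqrt v) := by
  rcases eq_or_ne v 0 with rfl | hv
  · simp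
  have hv' : (0 : ℝ) < v := by positivity
  rw [gaussianPDFReal_def, normalPDF, div_pow, Real.sq_sqrt hv'.le,
    Real.sqrt_mul (by positivity : (0 : ℝ) ≤ 2 * Real.pi)]
  field_simp
  rw [Real.sq_sqrt hv'.le]
  ring_nf

variable {ι : Type*} [Fintype ι] {a : ι → ℝ} {Ψ ψ : ℝ → ℝ} {ΨL ΨR : ι → ℝ} {C b : ℝ}

/-- Stein's identity for a bounded function with finitely many jumps. -/
theorem integral_mul_sub_gaussianReal_of_jumps (hv : v ≠ 0) (ha : Injective a)
    (hΨ : ∀ x, |Ψ x| ≤ C) (hderiv : ∀ x ∉ range a, HasDerivAt Ψ (ψ x) x)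
    (hψ : ∀ x ∉ range a, |ψ x| ≤ b)
    (hL : ∀ i, Tendsto Ψ (𝓝[<] (a i)) (𝓝 (ΨL i)))
    (hR : ∀ i, Tendsto Ψ (𝓝[>] (a i)) (𝓝 (ΨR i))) :
    ∫ x, Ψ x * (x - μ) ∂gaussianReal μ v =
      v * ∫ x, ψ x ∂gaussianReal μ v - v * ∑ i, (ΨL i - ΨR i) * gaussianPDFReal μ v (a i) := by
  set p := gaussianPDFReal μ v
  have hac := gaussianReal_absolutelyContinuous μ hv
  have hfin := (finite_range a).countable
  have hΨm : AEStronglyMeasurable Ψ volume :=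
    aestronglyMeasurable_of_continuousAt_off_countable hfin fun x hx =>
      (hderiv x hx).continuousAt
  have hψm : AEStronglyMeasurable ψ volume :=
    aestronglyMeasurable_of_hasDerivAt_off_countable hfin hderiv
  have hint₁ : Integrable (fun x => p x * (Ψ x * (x - μ))) := by
    rw [← integrable_gaussianReal_iff hv]
    exact (((memLp_id_gaussianReal 1).integrable le_rfl).sub (integrable_const μ)).bdd_mul
      (hΨm.mono_ac hac) (ae_of_all _ hΨ)
  have hint₂ : Integrable (fun x => p x * ψ x) := by
    rw [← integrable_gaussianReal_iff hv]
    exact .of_bound (hψm.mono_ac hac) b (hac.ae_le ((hfin.ae_notMem volume).mono hψ))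
  have hpt : ∀ x, Tendsto p (𝓝[≠] x) (𝓝 (p x)) := fun x =>
    (continuous_gaussianPDFReal.tendsto x).mono_left nhdsWithin_le_nhds
  have hlim := (tendsto_gaussianPDFReal_mul_cocompact (μ := μ) (v := v) hΨ).const_mul (v : ℝ)
  rw [mul_zero] at hlim
  have key := integral_eq_sub_sub_sum_jumps ha (F := fun x => v * (p x * Ψ x))
    (f := fun x => v * (p x * ψ x) - p x * (Ψ x * (x - μ)))
    (FL := fun i => v * (p (a i) * ΨL i)) (FR := fun i => v * (p (a i) * ΨR i))
    (fun x hx => (((hasDerivAt_gaussianPDFReal x).mul (hderiv x hx)).const_mul (v : ℝ)).congr_deriv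
      (by field_simp; ring))
    ((hint₂.const_mul v).sub hint₁)
    (fun i => ((((hpt _).mono_left (nhdsLT_le_nhdsNE _)).mul (hL i)).const_mul _))
    (fun i => ((((hpt _).mono_left (nhdsGT_le_nhdsNE _)).mul (hR i)).const_mul _))
    (hlim.mono_left atBot_le_cocompact) (hlim.mono_left atTop_le_cocompact)
  rw [integral_sub (hint₂.const_mul v) hint₁, integral_const_mul] at key
  have hsum : ∑ i, (v * (p (a i) * ΨR i) - v * (p (a i) * ΨL i))
      = -(v * ∑ i, (ΨL i - ΨR i) * p (a i)) := by
    rw [Finset.mul_sum, ← Finset.sum_neg_distrib]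
    exact Finset.sum_congr rfl fun i _ => by ring
  simp only [integral_gaussianReal_eq_integral_smul hv, smul_eq_mul]
  linear_combination -key + hsum

theorem HasLaw.integral_mul_sub_gaussianReal_of_jumps {Ω : Type*} [MeasurableSpace Ω]
    {P : Measure Ω} {Y : Ω → ℝ} (hY : HasLaw Y (gaussianReal μ v) P) (hv : v ≠ 0)
    (ha : Injective a) (hΨ : ∀ x, |Ψ x| ≤ C) (hderiv : ∀ x ∉ range a, HasDerivAt Ψ (ψ x) x)
    (hψ : ∀ x ∉ range a, |ψ x| ≤ b)
    (hL : ∀ i, Tendsto Ψ (𝓝[<] (a i)) (𝓝 (ΨL i)))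
    (hR : ∀ i, Tendsto Ψ (𝓝[>] (a i)) (𝓝 (ΨR i))) :
    ∫ ω, Ψ (Y ω) * (Y ω - μ) ∂P =
      v * ∫ ω, ψ (Y ω) ∂P - v * ∑ i, (ΨL i - ΨR i) * gaussianPDFReal μ v (a i) := by
  have hac := gaussianReal_absolutelyContinuous μ hv
  have hfin := (finite_range a).countable
  have hΨm : AEStronglyMeasurable Ψ (gaussianReal μ v) :=
    (aestronglyMeasurable_of_continuousAt_off_countable hfin fun x hx =>
      (hderiv x hx).continuousAt).mono_ac hac
  have hψm : AEStronglyMeasurable ψ (gaussianReal μ v) :=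
    (aestronglyMeasurable_of_hasDerivAt_off_countable hfin hderiv).mono_ac hac
  have hlhs : ∫ ω, Ψ (Y ω) * (Y ω - μ) ∂P = ∫ x, Ψ x * (x - μ) ∂gaussianReal μ v :=
    hY.integral_comp (f := fun x => Ψ x * (x - μ)) (hΨm.mul (by fun_prop))
  have hrhs : ∫ ω, ψ (Y ω) ∂P = ∫ x, ψ x ∂gaussianReal μ v := hY.integral_comp hψm
  rw [hlhs, hrhs]
  exact ProbabilityTheory.integral_mul_sub_gaussianReal_of_jumps hv ha hΨ hderiv hψ hL hR

end ProbabilityTheory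

theorem gaussian_smoothed_identity_general
    {Ω : Type*} [MeasurableSpace Ω] (P : Measure Ω)
    (c : NNReal) (hc : 0 < c) (h : ℝ) (hh : 0 < h)
    (X : Ω → ℝ) (hX : Measurable X)
    (hlaw : Measure.map X P = gaussianReal 0 c)
    -- the piecewise-smooth setup: `Ψ` bounded and non-increasing
    (Ψ ψ ψt : ℝ → ℝ) {n : ℕ} (a ΨL ΨR : Fin n → ℝ) (bΨ CΨ : ℝ)
    (hΨbd : ∀ x : ℝ, |Ψ x| ≤ CΨ)
    (ha : StrictMono a)
    (hderiv : ∀ x ∉ Set.range a, HasDerivAt Ψ (ψ x) x)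
    (hψcont : ContinuousOn ψ (Set.range a)ᶜ)
    (hψbd : ∀ x ∉ Set.range a, |ψ x| ≤ bΨ)
    (hψt : ∀ x : ℝ, Tendsto ψ (nhdsWithin x (Set.Iio x)) (nhds (ψt x)))
    (hΨL : ∀ i, Tendsto Ψ (nhdsWithin (a i) (Set.Iio (a i))) (nhds (ΨL i)))
    (hΨR : ∀ i, Tendsto Ψ (nhdsWithin (a i) (Set.Ioi (a i))) (nhds (ΨR i))) :
    ∫ ω, Ψ (h * X ω) * X ω ∂P =
      (c : ℝ) * h * ∫ ω, ψt (h * X ω) ∂P -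
        Real.sqrt c * ∑ i, (ΨL i - ΨR i) * normalPDF (a i / (h * Real.sqrt c)) := by
  have hψt_eq : ∀ x ∉ range a, ψt x = ψ x := fun x hx =>
    tendsto_nhds_unique (hψt x) ((hψcont.continuousAt
      ((finite_range a).isClosed.isOpen_compl.mem_nhds hx)).tendsto.mono_left nhdsWithin_le_nhds)
  have hY := gaussianReal_const_mul ⟨hX.aemeasurable, hlaw⟩ h
  rw [mul_zero] at hY
  set v : ℝ≥0 := .mk (h ^ 2) (sq_nonneg h) * c
  have hv : (v : ℝ) = h ^ 2 * c := rfl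
  have hv0 : v ≠ 0 := by
    rw [← NNReal.coe_ne_zero, hv]
    positivity
  have hstein := hY.integral_mul_sub_gaussianReal_of_jumps hv0 ha.injective hΨbd
    (fun x hx => hψt_eq x hx ▸ hderiv x hx) (fun x hx => hψt_eq x hx ▸ hψbd x hx) hΨL hΨR
  have hsqrt : Real.sqrt v = h * Real.sqrt c := by
    rw [hv, Real.sqrt_mul (sq_nonneg h), Real.sqrt_sq hh.le]
  have hjump : ∀ i, (v : ℝ) * ((ΨL i - ΨR i) * gaussianPDFReal 0 v (a i))
      = h * (Real.sqrt c * ((ΨL i - ΨR i) * normalPDF (a i / (h * Real.sqrt c)))) := fun i => by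
    rw [mul_left_comm, mul_gaussianPDFReal_zero, hsqrt]
    ring
  calc ∫ ω, Ψ (h * X ω) * X ω ∂P = h⁻¹ * ∫ ω, Ψ (h * X ω) * (h * X ω - 0) ∂P := by
        rw [← integral_const_mul]
        congr 1 with ω
        field_simp
        ring
    _ = _ := by
        rw [hstein, Finset.mul_sum, Finset.sum_congr rfl fun i _ => hjump i, ← Finset.mul_sum,
          ← Finset.mul_sum, hv]
        field_simp

/-- Appendix A identity: if `X ~ N(0, c)` then
`E[Ψ(h·X)·X] = c·h·E[ψ̃(h·X)] − √c·Σᵢ (Ψ(aᵢ⁻) − Ψ(aᵢ⁺))·φ(aᵢ/(h·√c))`. -/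
theorem gaussian_smoothed_identity
    {Ω : Type*} [MeasurableSpace Ω] (P : Measure Ω) [IsProbabilityMeasure P]
    (c : NNReal) (hc : 0 < c) (h : ℝ) (hh : 0 < h)
    (X : Ω → ℝ) (hX : Measurable X)
    (hlaw : Measure.map X P = gaussianReal 0 c)
    -- the piecewise-smooth setup: `Ψ` bounded and non-increasing
    (Ψ ψ ψt : ℝ → ℝ) {n : ℕ} (a ΨL ΨR : Fin n → ℝ) (bΨ CΨ : ℝ)
    (hΨanti : Antitone Ψ) (hΨbd : ∀ x : ℝ, |Ψ x| ≤ CΨ)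
    (ha : StrictMono a)
    (hderiv : ∀ x ∉ Set.range a, HasDerivAt Ψ (ψ x) x)
    (hψcont : ContinuousOn ψ (Set.range a)ᶜ)
    (hψbd : ∀ x ∉ Set.range a, |ψ x| ≤ bΨ)
    (hψt : ∀ x : ℝ, Tendsto ψ (nhdsWithin x (Set.Iio x)) (nhds (ψt x)))
    (hΨL : ∀ i, Tendsto Ψ (nhdsWithin (a i) (Set.Iio (a i))) (nhds (ΨL i)))
    (hΨR : ∀ i, Tendsto Ψ (nhdsWithin (a i) (Set.Ioi (a i))) (nhds (ΨR i))) :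
    ∫ ω, Ψ (h * X ω) * X ω ∂P =
      (c : ℝ) * h * ∫ ω, ψt (h * X ω) ∂P -
        Real.sqrt c * ∑ i, (ΨL i - ΨR i) * normalPDF (a i / (h * Real.sqrt c)) :=
  gaussian_smoothed_identity_general P c hc h hh X hX hlaw Ψ ψ ψt a ΨL ΨR bΨ CΨ hΨbd ha hderiv
    hψcont hψbd hψt hΨL hΨR
end
end
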